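/- arXiv:2208.11655 — 2 statements merged into one kernel-verified Lean document; each statement's English description precedes it below -/
import Mathlib

section
/- Let f : C² → C be a mixed polynomial which is Newton non-degenerate and convenient. Then f has an inner Newton non-degenerate boundary. -/
open Complex

noncomputable section

/-- The index of a mixed monomial: `((ν₁,ν₂),(μ₁,μ₂))`. -/
abbrev MixedIdx : Type := (ℕ × ℕ) × (ℕ × ℕ)

/-- The coefficients `c_{ν,μ}` of a mixed polynomial `f(z,z̄) = Σ c_{ν,μ} z^ν z̄^μ`. -/
abbrev MixedCoeff : Type := MixedIdx → ℂ

/-- The exponent `ν + μ` of a mixed monomial index. -/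
def expo (p : MixedIdx) : ℕ × ℕ := (p.1.1 + p.2.1, p.1.2 + p.2.2)

/-- The linear form `ℓ_P` associated to a weight vector `P`; `ℓ_P ∘ expo` is the
radial degree `rdeg_P`. -/
def ellP (P : ℕ × ℕ) (w : ℕ × ℕ) : ℕ := P.1 * w.1 + P.2 * w.2

/-- The mixed monomial `u^ν₁ v^ν₂ ū^μ₁ v̄^μ₂`. -/
def mono (p : MixedIdx) (u v : ℂ) : ℂ :=
  u ^ p.1.1 * v ^ p.1.2 * (starRingEnd ℂ u) ^ p.2.1 * (starRingEnd ℂ v) ^ p.2.2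

/-- Evaluation of the mixed polynomial with coefficients `c` at `(u,v) ∈ ℂ²`. -/
def eval (c : MixedCoeff) (u v : ℂ) : ℂ := ∑ᶠ p, c p * mono p u v

/-- `c` has finitely many nonzero coefficients (so it really is a polynomial). -/
def FiniteSupp (c : MixedCoeff) : Prop := (Function.support c).Finite

/-- Wirtinger derivative `∂/∂u` at the level of coefficients. -/
def Du (c : MixedCoeff) : MixedCoeff := fun p => (p.1.1 + 1 : ℂ) * c ((p.1.1 + 1, p.1.2), p.2)

/-- Wirtinger derivative `∂/∂ū` at the level of coefficients. -/
def Dub (c : MixedCoeff) : MixedCoeff := fun p => (p.2.1 + 1 : ℂ) * c (p.1, (p.2.1 + 1, p.2.2))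

/-- Wirtinger derivative `∂/∂v` at the level of coefficients. -/
def Dv (c : MixedCoeff) : MixedCoeff := fun p => (p.1.2 + 1 : ℂ) * c ((p.1.1, p.1.2 + 1), p.2)

/-- Wirtinger derivative `∂/∂v̄` at the level of coefficients. -/
def Dvb (c : MixedCoeff) : MixedCoeff := fun p => (p.2.2 + 1 : ℂ) * c (p.1, (p.2.1, p.2.2 + 1))

/-- `(u,v)` is a critical point of the mixed polynomial `c` (the real Jacobian of the
associated map `ℝ⁴ → ℝ²` has rank `≤ 1`), expressed through Oka's equations
`s₁ = s₂ = s₃ = 0`. -/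
def Crit (c : MixedCoeff) (u v : ℂ) : Prop :=
  eval (Du c) u v * starRingEnd ℂ (eval (Dvb c) u v)
      - starRingEnd ℂ (eval (Dub c) u v) * eval (Dv c) u v = 0 ∧
  ‖eval (Du c) u v‖ = ‖eval (Dub c) u v‖ ∧
  ‖eval (Dv c) u v‖ = ‖eval (Dvb c) u v‖

/-- `d(P; c)`: the minimal radial degree of a monomial of `c` w.r.t. the weight `P`. -/
def dmin (P : ℕ × ℕ) (c : MixedCoeff) : ℕ :=
  sInf {n : ℕ | ∃ p, c p ≠ 0 ∧ ellP P (expo p) = n}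

/-- The `P`-relative face function: the monomials of minimal radial degree. -/
def face (P : ℕ × ℕ) (c : MixedCoeff) : MixedCoeff :=
  fun p => if ellP P (expo p) = dmin P c then c p else 0

/-- The face function of the vertex `w`: all monomials with exponent `w`. -/
def vertexFace (w : ℕ × ℕ) (c : MixedCoeff) : MixedCoeff :=
  fun p => if expo p = w then c p else 0

/-- `P` is the (primitive, positive) weight vector of a compact 1-face of the Newton
boundary of `c`: at least two distinct exponents realize the minimal radial degree. -/
def IsFaceWeight (c : MixedCoeff) (P : ℕ × ℕ) : Prop :=
  0 < P.1 ∧ 0 < P.2 ∧ Nat.gcd P.1 P.2 = 1 ∧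
  ∃ p q, c p ≠ 0 ∧ c q ≠ 0 ∧ expo p ≠ expo q ∧
    ellP P (expo p) = dmin P c ∧ ellP P (expo q) = dmin P c

/-- `P` is the weight vector of the steepest compact 1-face (the face `Δ(P₁)`). -/
def IsSteepest (c : MixedCoeff) (P : ℕ × ℕ) : Prop :=
  IsFaceWeight c P ∧ ∀ Q, IsFaceWeight c Q → Q.1 * P.2 ≤ P.1 * Q.2

/-- `P` is the weight vector of the least steep compact 1-face (the face `Δ(P_N)`). -/
def IsLeastSteep (c : MixedCoeff) (P : ℕ × ℕ) : Prop :=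
  IsFaceWeight c P ∧ ∀ Q, IsFaceWeight c Q → P.1 * Q.2 ≤ Q.1 * P.2

/-- `w` is a non-extreme vertex of the Newton boundary: a vertex (an exponent of `c`
lying on the boundary) bounding two different compact 1-faces. -/
def NonExtremeVertex (c : MixedCoeff) (w : ℕ × ℕ) : Prop :=
  (∃ p, c p ≠ 0 ∧ expo p = w) ∧
  ∃ P Q, IsFaceWeight c P ∧ IsFaceWeight c Q ∧ P.1 * Q.2 ≠ Q.1 * P.2 ∧
    ellP P w = dmin P c ∧ ellP Q w = dmin Q c

/-- `c` has an inner Newton non-degenerate boundary. -/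
def InnerNonDeg (c : MixedCoeff) : Prop :=
  (∀ P, IsSteepest c P → ∀ u v : ℂ, v ≠ 0 →
      eval (face P c) u v = 0 → ¬ Crit (face P c) u v) ∧
  (∀ P, IsLeastSteep c P → ∀ u v : ℂ, u ≠ 0 →
      eval (face P c) u v = 0 → ¬ Crit (face P c) u v) ∧
  (∀ P, IsFaceWeight c P → ∀ u v : ℂ, u ≠ 0 → v ≠ 0 →
      eval (face P c) u v = 0 → ¬ Crit (face P c) u v) ∧
  (∀ w, NonExtremeVertex c w → ∀ u v : ℂ, u ≠ 0 → v ≠ 0 →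
      eval (vertexFace w c) u v = 0 → ¬ Crit (vertexFace w c) u v)

/-- `c` has a strongly inner Newton non-degenerate boundary. -/
def StronglyInnerNonDeg (c : MixedCoeff) : Prop :=
  (∀ P, IsSteepest c P → ∀ u v : ℂ, v ≠ 0 → ¬ Crit (face P c) u v) ∧
  (∀ P, IsLeastSteep c P → ∀ u v : ℂ, u ≠ 0 → ¬ Crit (face P c) u v) ∧
  (∀ P, IsFaceWeight c P → ∀ u v : ℂ, u ≠ 0 → v ≠ 0 → ¬ Crit (face P c) u v) ∧
  (∀ w, NonExtremeVertex c w → ∀ u v : ℂ, u ≠ 0 → v ≠ 0 → ¬ Crit (vertexFace w c) u v)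

/-- Oka's Newton non-degeneracy: for every compact face (equivalently, for every
positive weight vector `Q`) the face function has no critical points on its zero set
in `(ℂ*)²`. -/
def NewtonNonDeg (c : MixedCoeff) : Prop :=
  ∀ Q : ℕ × ℕ, 0 < Q.1 → 0 < Q.2 → ∀ u v : ℂ, u ≠ 0 → v ≠ 0 →
    eval (face Q c) u v = 0 → ¬ Crit (face Q c) u v

/-- Oka's strong Newton non-degeneracy: every face function has no critical points
in `(ℂ*)²`. -/
def StronglyNewtonNonDeg (c : MixedCoeff) : Prop :=
  ∀ Q : ℕ × ℕ, 0 < Q.1 → 0 < Q.2 → ∀ u v : ℂ, u ≠ 0 → v ≠ 0 →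
    ¬ Crit (face Q c) u v

/-- The Newton boundary meets the horizontal axis. -/
def UConvenient (c : MixedCoeff) : Prop := ∃ p, c p ≠ 0 ∧ (expo p).2 = 0

/-- The Newton boundary meets the vertical axis. -/
def VConvenient (c : MixedCoeff) : Prop := ∃ p, c p ≠ 0 ∧ (expo p).1 = 0

/-- The monomial index `p` lies on the Newton boundary of `c`. -/
def OnBoundary (c : MixedCoeff) (p : MixedIdx) : Prop :=
  ∃ Q : ℕ × ℕ, 0 < Q.1 ∧ 0 < Q.2 ∧ ellP Q (expo p) = dmin Q c

/-! ### Auxiliary: flip machinery -/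

def flipIdx (p : MixedIdx) : MixedIdx := ((p.1.2, p.1.1), (p.2.2, p.2.1))

def flipC (c : MixedCoeff) : MixedCoeff := fun p => c (flipIdx p)

def flipEquiv : MixedIdx ≃ MixedIdx :=
  ⟨flipIdx, flipIdx, fun _ => rfl, fun _ => rfl⟩

lemma expo_flip (p : MixedIdx) : expo (flipIdx p) = ((expo p).2, (expo p).1) := rfl

lemma ellP_flip (P : ℕ × ℕ) (p : MixedIdx) :
    ellP (P.2, P.1) (expo p) = ellP P (expo (flipIdx p)) := by
  simp [ellP, expo_flip]; ring

lemma mono_flip (p : MixedIdx) (u v : ℂ) : mono (flipIdx p) u v = mono p v u := by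
  simp [mono, flipIdx]; ring

lemma eval_flip (c : MixedCoeff) (u v : ℂ) : eval (flipC c) u v = eval c v u := by
  unfold eval
  rw [← finsum_comp_equiv flipEquiv (f := fun q => c q * mono q v u)]
  exact finsum_congr fun p => by
    simp only [flipEquiv, Equiv.coe_fn_mk, mono_flip, flipC]
    show c (flipIdx p) * mono p u v = c (flipIdx p) * mono (flipIdx p) v u
    rw [mono_flip]

lemma dmin_flip (c : MixedCoeff) (P : ℕ × ℕ) : dmin (P.2, P.1) (flipC c) = dmin P c := by
  unfold dmin
  congr 1
  ext n
  constructor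
  · rintro ⟨p, h1, h2⟩
    exact ⟨flipIdx p, h1, by rw [← ellP_flip]; exact h2⟩
  · rintro ⟨p, h1, h2⟩
    exact ⟨flipIdx p, h1, by rw [ellP_flip]; exact h2⟩

lemma face_flip (c : MixedCoeff) (P : ℕ × ℕ) :
    face (P.2, P.1) (flipC c) = flipC (face P c) := by
  funext p
  simp only [face, flipC, dmin_flip, ellP_flip]

lemma Du_flip (c : MixedCoeff) : Du (flipC c) = flipC (Dv c) := rfl
lemma Dv_flip (c : MixedCoeff) : Dv (flipC c) = flipC (Du c) := rfl
lemma Dub_flip (c : MixedCoeff) : Dub (flipC c) = flipC (Dvb c) := rfl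
lemma Dvb_flip (c : MixedCoeff) : Dvb (flipC c) = flipC (Dub c) := rfl

lemma crit_flip (c : MixedCoeff) (u v : ℂ) : Crit (flipC c) u v ↔ Crit c v u := by
  unfold Crit
  rw [Du_flip, Dv_flip, Dub_flip, Dvb_flip, eval_flip, eval_flip, eval_flip, eval_flip]
  constructor
  · rintro ⟨h1, h2, h3⟩
    refine ⟨?_, h3, h2⟩
    rw [← neg_eq_zero, ← h1]; ring
  · rintro ⟨h1, h2, h3⟩
    refine ⟨?_, h3, h2⟩
    rw [← neg_eq_zero, ← h1]; ring
lemma finiteSupp_flip {c : MixedCoeff} (h : FiniteSupp c) : FiniteSupp (flipC c) := by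
  have : Function.support (flipC c) = flipIdx ⁻¹' (Function.support c) := rfl
  rw [FiniteSupp, this]
  exact h.preimage (Function.Injective.injOn (fun p q hpq => by
    have : flipIdx (flipIdx p) = flipIdx (flipIdx q) := by rw [hpq]
    exact this))

lemma isFaceWeight_flip {c : MixedCoeff} {P : ℕ × ℕ} (h : IsFaceWeight c P) :
    IsFaceWeight (flipC c) (P.2, P.1) := by
  obtain ⟨h1, h2, h3, p, q, hp, hq, hpq, hpd, hqd⟩ := h
  refine ⟨h2, h1, by rwa [Nat.gcd_comm], flipIdx p, flipIdx q, hp, hq, ?_, ?_, ?_⟩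
  · intro hcon
    apply hpq
    have : ((expo p).2, (expo p).1) = ((expo q).2, (expo q).1) := by
      rw [← expo_flip, ← expo_flip, hcon]
    exact Prod.ext (congrArg Prod.snd this) (congrArg Prod.fst this)
  · rw [show expo (flipIdx p) = expo (flipIdx p) from rfl, ← ellP_flip, dmin_flip]
    · simpa [ellP, mul_comm] using hpd
  · rw [← ellP_flip, dmin_flip]
    simpa [ellP, mul_comm] using hqd

lemma isFaceWeight_flip_iff {c : MixedCoeff} {P : ℕ × ℕ} :
    IsFaceWeight (flipC c) (P.2, P.1) ↔ IsFaceWeight c P := by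
  constructor
  · intro h
    have := isFaceWeight_flip h
    simpa [show flipC (flipC c) = c from rfl] using this
  · exact isFaceWeight_flip

lemma isSteepest_flip {c : MixedCoeff} {P : ℕ × ℕ} (h : IsLeastSteep c P) :
    IsSteepest (flipC c) (P.2, P.1) := by
  refine ⟨isFaceWeight_flip h.1, fun Q hQ => ?_⟩
  have hQ' : IsFaceWeight c (Q.2, Q.1) := by
    rw [← isFaceWeight_flip_iff]; exact hQ
  have := h.2 _ hQ'
  simpa [mul_comm] using this

lemma newtonNonDeg_flip {c : MixedCoeff} (h : NewtonNonDeg c) : NewtonNonDeg (flipC c) := by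
  intro Q hQ1 hQ2 u v hu hv hev hcrit
  have hface : face Q (flipC c) = flipC (face (Q.2, Q.1) c) := face_flip c (Q.2, Q.1)
  rw [hface, eval_flip] at hev
  rw [hface, crit_flip] at hcrit
  exact h (Q.2, Q.1) hQ2 hQ1 v u hv hu hev hcrit

lemma vConvenient_flip {c : MixedCoeff} (h : UConvenient c) : VConvenient (flipC c) := by
  obtain ⟨p, hp, hpe⟩ := h
  exact ⟨flipIdx p, hp, by rw [expo_flip]; exact hpe⟩
lemma dmin_le {c : MixedCoeff} {P : ℕ × ℕ} {p : MixedIdx} (h : c p ≠ 0) :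
    dmin P c ≤ ellP P (expo p) :=
  Nat.sInf_le ⟨p, h, rfl⟩

lemma dmin_eq {c : MixedCoeff} {P : ℕ × ℕ} {n : ℕ}
    (hmem : ∃ p, c p ≠ 0 ∧ ellP P (expo p) = n)
    (hlb : ∀ p, c p ≠ 0 → n ≤ ellP P (expo p)) : dmin P c = n := by
  refine le_antisymm (Nat.sInf_le hmem) (le_csInf ⟨n, hmem⟩ ?_)
  rintro k ⟨p, hp, rfl⟩
  exact hlb p hp

/-- The minimal second coordinate of exponents on the `v`-axis. -/
def vAxisMin (c : MixedCoeff) : ℕ := sInf {b : ℕ | ∃ p, c p ≠ 0 ∧ expo p = (0, b)}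

lemma vAxisMin_mem {c : MixedCoeff} (hvc : VConvenient c) :
    ∃ p, c p ≠ 0 ∧ expo p = (0, vAxisMin c) := by
  have hne : {b : ℕ | ∃ p, c p ≠ 0 ∧ expo p = (0, b)}.Nonempty := by
    obtain ⟨p, hp, hpe⟩ := hvc
    exact ⟨(expo p).2, p, hp, by rw [← hpe]⟩
  exact Nat.sInf_mem hne

lemma vAxisMin_le {c : MixedCoeff} {p : MixedIdx} (hp : c p ≠ 0) (he : (expo p).1 = 0) :
    vAxisMin c ≤ (expo p).2 :=
  Nat.sInf_le ⟨p, hp, by rw [← he]⟩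

/-- Key combinatorial lemma: for the steepest face weight `P` of a `v`-convenient
polynomial, the `v`-axis vertex lies on the face of `P`. -/
lemma steepest_dmin {c : MixedCoeff} (hfin : FiniteSupp c) (hvc : VConvenient c)
    {P : ℕ × ℕ} (hP : IsSteepest c P) : dmin P c = P.2 * vAxisMin c := by
  set m := vAxisMin c with hm
  obtain ⟨p0, hp0, hp0e⟩ := vAxisMin_mem hvc
  have hp0ell : ellP P (expo p0) = P.2 * m := by rw [hp0e]; simp [ellP]; exact Or.inl hm.symm
  by_contra hne
  have hlt : dmin P c < P.2 * m :=
    lt_of_le_of_ne (hp0ell ▸ dmin_le hp0) hne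
  obtain ⟨hP1, hP2, _, p, q, hp, hq, hpq, hpd, hqd⟩ := hP.1
  -- every face point has first coordinate ≥ 1
  have hfacepos : ∀ r : MixedIdx, c r ≠ 0 → ellP P (expo r) = dmin P c → (expo r).1 ≠ 0 := by
    intro r hr hrd hcon
    have h1 : m ≤ (expo r).2 := vAxisMin_le hr hcon
    have h2 : ellP P (expo r) = P.2 * (expo r).2 := by simp [ellP, hcon]
    have h3 : P.2 * m ≤ P.2 * (expo r).2 := Nat.mul_le_mul_left _ h1
    omega
  have hpa : (expo p).1 ≠ 0 := hfacepos p hp hpd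
  -- the finite support and the set of off-axis points
  classical
  set S := hfin.toFinset with hS
  have hpS : p ∈ S := hfin.mem_toFinset.2 hp
  set T := S.filter (fun r => (expo r).1 ≠ 0) with hT
  have hpT : p ∈ T := Finset.mem_filter.2 ⟨hpS, hpa⟩
  obtain ⟨qs, hqsT, hmax⟩ :=
    T.exists_max_image (fun r => ((m : ℚ) - (expo r).2) / (expo r).1) ⟨p, hpT⟩
  set a := (expo qs).1 with ha
  set b := (expo qs).2 with hb
  have haq : a ≠ 0 := (Finset.mem_filter.1 hqsT).2
  have haqQ : (0 : ℚ) < (a : ℚ) := by exact_mod_cast Nat.pos_of_ne_zero haq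
  have hqs0 : c qs ≠ 0 := hfin.mem_toFinset.1 (Finset.mem_filter.1 hqsT).1
  have hpaQ : (0 : ℚ) < ((expo p).1 : ℚ) := by exact_mod_cast Nat.pos_of_ne_zero hpa
  have hP2Q : (0 : ℚ) < (P.2 : ℚ) := by exact_mod_cast hP2
  -- the slope through p beats the slope of P
  have hNp : P.1 * (expo p).1 + P.2 * (expo p).2 < P.2 * m := by
    have : ellP P (expo p) = P.1 * (expo p).1 + P.2 * (expo p).2 := rfl
    omega
  have hratp : (P.1 : ℚ) / P.2 < ((m : ℚ) - (expo p).2) / (expo p).1 := by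
    rw [div_lt_div_iff₀ hP2Q hpaQ]
    have : (P.1 : ℚ) * (expo p).1 + P.2 * (expo p).2 < P.2 * m := by exact_mod_cast hNp
    linarith
  have hrat : (P.1 : ℚ) / P.2 < ((m : ℚ) - b) / a :=
    lt_of_lt_of_le hratp (hmax p hpT)
  have hbm : b < m := by
    have h0 : (0 : ℚ) < ((m : ℚ) - b) / a :=
      lt_trans (by positivity) hrat
    have : (0 : ℚ) < (m : ℚ) - b := by
      by_contra hcon
      push_neg at hcon
      have : ((m : ℚ) - b) / a ≤ 0 := div_nonpos_of_nonpos_of_nonneg hcon haqQ.le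
      linarith
    have : (b : ℚ) < m := by linarith
    exact_mod_cast this
  have hcross : P.1 * a < P.2 * (m - b) := by
    have h1 : (P.1 : ℚ) * a < ((m : ℚ) - b) * P.2 := (div_lt_div_iff₀ hP2Q haqQ).1 hrat
    have h2 : ((m - b : ℕ) : ℚ) = (m : ℚ) - b := by
      push_cast [Nat.cast_sub hbm.le]; ring
    have : (P.1 : ℚ) * a < (P.2 : ℚ) * ((m - b : ℕ) : ℚ) := by rw [h2]; linarith
    exact_mod_cast this
  -- construct the competing primitive weight Q
  set D := m - b with hD
  have hDpos : 0 < D := by omega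
  set g := Nat.gcd D a with hg
  have hgpos : 0 < g := Nat.gcd_pos_of_pos_left _ hDpos
  have hgD : g ∣ D := Nat.gcd_dvd_left _ _
  have hga : g ∣ a := Nat.gcd_dvd_right _ _
  set Q : ℕ × ℕ := (D / g, a / g) with hQ
  have hQ1 : 0 < Q.1 := Nat.div_pos (Nat.le_of_dvd hDpos hgD) hgpos
  have hQ2 : 0 < Q.2 := Nat.div_pos (Nat.le_of_dvd (Nat.pos_of_ne_zero haq) hga) hgpos
  have hQcop : Nat.gcd Q.1 Q.2 = 1 := Nat.coprime_div_gcd_div_gcd hgpos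
  have hgmul : ∀ w : ℕ × ℕ, g * ellP Q w = ellP (D, a) w := by
    intro w
    show g * (D / g * w.1 + a / g * w.2) = D * w.1 + a * w.2
    rw [Nat.mul_add, ← Nat.mul_assoc, ← Nat.mul_assoc,
      Nat.mul_div_cancel' hgD, Nat.mul_div_cancel' hga]
  -- lower bound for the unscaled weight
  have hlb0 : ∀ r, c r ≠ 0 → a * m ≤ ellP (D, a) (expo r) := by
    intro r hr
    show a * m ≤ D * (expo r).1 + a * (expo r).2
    by_cases hra : (expo r).1 = 0
    · have h1 : m ≤ (expo r).2 := vAxisMin_le hr hra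
      have := Nat.mul_le_mul_left a h1
      omega
    · have hrT : r ∈ T := Finset.mem_filter.2 ⟨hfin.mem_toFinset.2 hr, hra⟩
      have hraQ : (0 : ℚ) < ((expo r).1 : ℚ) := by exact_mod_cast Nat.pos_of_ne_zero hra
      have h1 : ((m : ℚ) - (expo r).2) / (expo r).1 ≤ ((m : ℚ) - b) / a := hmax r hrT
      have h2 : ((m : ℚ) - (expo r).2) * a ≤ ((m : ℚ) - b) * (expo r).1 :=
        (div_le_div_iff₀ hraQ haqQ).1 h1
      have h3 : ((D : ℕ) : ℚ) = (m : ℚ) - b := by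
        rw [hD]; push_cast [Nat.cast_sub hbm.le]; ring
      have : (a : ℚ) * m ≤ (D : ℚ) * (expo r).1 + a * (expo r).2 := by
        rw [h3]; linarith
      exact_mod_cast this
  have hp0Q0 : ellP (D, a) (expo p0) = a * m := by rw [hp0e]; show D * 0 + a * m = a * m; omega
  have hqsQ0 : ellP (D, a) (expo qs) = a * m := by
    show D * a + a * b = a * m
    have : D + b = m := by omega
    calc D * a + a * b = a * (D + b) := by ring
    _ = a * m := by rw [this]
  -- dmin for Q
  have hdQ : dmin Q c = Q.2 * m := by
    refine dmin_eq ⟨p0, hp0, ?_⟩ ?_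
    · show Q.1 * (expo p0).1 + Q.2 * (expo p0).2 = Q.2 * m
      rw [hp0e]
      show Q.1 * 0 + Q.2 * vAxisMin c = Q.2 * m
      rw [← hm]
      omega
    · intro r hr
      have h1 : g * (Q.2 * m) = a * m := by
        rw [← Nat.mul_assoc, Nat.mul_div_cancel' hga]
      have h2 : a * m ≤ g * ellP Q (expo r) := by rw [hgmul]; exact hlb0 r hr
      have := h2
      rw [← h1] at this
      exact Nat.le_of_mul_le_mul_left this hgpos
  -- Q is a face weight
  have hQfw : IsFaceWeight c Q := by
    refine ⟨hQ1, hQ2, hQcop, p0, qs, hp0, hqs0, ?_, ?_, ?_⟩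
    · rw [hp0e]
      intro hcon
      exact haq (by rw [ha, ← hcon])
    · rw [hdQ]
      have : g * ellP Q (expo p0) = g * (Q.2 * m) := by
        rw [hgmul, hp0Q0, ← Nat.mul_assoc, Nat.mul_div_cancel' hga]
      exact Nat.eq_of_mul_eq_mul_left hgpos this
    · rw [hdQ]
      have : g * ellP Q (expo qs) = g * (Q.2 * m) := by
        rw [hgmul, hqsQ0, ← Nat.mul_assoc, Nat.mul_div_cancel' hga]
      exact Nat.eq_of_mul_eq_mul_left hgpos this
  -- contradiction with steepness
  have hle := hP.2 Q hQfw
  have hle' : P.2 * D ≤ P.1 * a := by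
    have h1 : g * Q.1 = D := Nat.mul_div_cancel' hgD
    have h2 : g * Q.2 = a := Nat.mul_div_cancel' hga
    calc P.2 * D = g * (Q.1 * P.2) := by rw [← h1]; ring
    _ ≤ g * (P.1 * Q.2) := Nat.mul_le_mul_left g hle
    _ = P.1 * a := by rw [← h2]; ring
  exact absurd hcross (not_lt.2 hle')
lemma main_v (c : MixedCoeff) (hfin : FiniteSupp c) (hvc : VConvenient c)
    (hnd : NewtonNonDeg c) {P : ℕ × ℕ} (hP : IsSteepest c P) :
    ∀ u v : ℂ, v ≠ 0 → eval (face P c) u v = 0 → ¬ Crit (face P c) u v := by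
  intro u v hv hev hcrit
  rcases eq_or_ne u 0 with rfl | hu
  swap
  · exact hnd P hP.1.1 hP.1.2.1 u v hu hv hev hcrit
  classical
  set m := vAxisMin c with hm
  obtain ⟨p0, hp0, hp0e⟩ := vAxisMin_mem hvc
  have hdm : dmin P c = P.2 * m := steepest_dmin hfin hvc hP
  have hP2 : 0 < P.2 := hP.1.2.1
  set M := hfin.toFinset.sup (fun p => (expo p).2) with hM
  have hmM : m ≤ M := by
    have h1 : (expo p0).2 ≤ M :=
      Finset.le_sup (f := fun p => (expo p).2) (hfin.mem_toFinset.2 hp0)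
    rw [hp0e] at h1
    exact h1
  set Q' : ℕ × ℕ := (M + 1, 1) with hQ'
  have hdQ : dmin Q' c = m := by
    refine dmin_eq ⟨p0, hp0, by rw [hp0e]; show (M+1)*0 + 1*m = m; omega⟩ ?_
    intro r hr
    show m ≤ (M+1) * (expo r).1 + 1 * (expo r).2
    by_cases hra : (expo r).1 = 0
    · have := vAxisMin_le hr hra
      omega
    · have h1 : M + 1 ≤ (M+1) * (expo r).1 :=
        Nat.le_mul_of_pos_right _ (Nat.pos_of_ne_zero hra)
      omega
  -- explicit description of the face of Q'
  have hfq : ∀ p : MixedIdx,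
      face Q' c p = if p.1.1 + p.2.1 = 0 ∧ p.1.2 + p.2.2 = m then c p else 0 := by
    intro p
    rw [face, hdQ]
    have hell : ellP Q' (expo p) = (M+1) * (p.1.1 + p.2.1) + 1 * (p.1.2 + p.2.2) := rfl
    by_cases h : p.1.1 + p.2.1 = 0 ∧ p.1.2 + p.2.2 = m
    · rw [if_pos h, if_pos (by rw [hell, h.1, h.2]; omega)]
    · rw [if_neg h, if_neg ?_]
      intro hcon
      rw [hell] at hcon
      by_cases h0 : p.1.1 + p.2.1 = 0
      · rw [h0] at hcon
        exact h ⟨h0, by omega⟩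
      · have h2 : M + 1 ≤ (M+1) * (p.1.1 + p.2.1) :=
          Nat.le_mul_of_pos_right _ (Nat.pos_of_ne_zero h0)
        omega
  -- explicit description of the face of P on axis indices
  have hfp : ∀ p : MixedIdx, p.1.1 + p.2.1 = 0 →
      face P c p = if p.1.2 + p.2.2 = m then c p else 0 := by
    intro p h0
    rw [face, hdm]
    have h1 : ellP P (expo p) = P.1 * (p.1.1 + p.2.1) + P.2 * (p.1.2 + p.2.2) := rfl
    by_cases h : p.1.2 + p.2.2 = m
    · rw [if_pos h, if_pos (by rw [h1, h0, h]; omega)]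
    · rw [if_neg h, if_neg ?_]
      rw [h1, h0]
      intro hcon
      have : p.1.2 + p.2.2 = m :=
        Nat.eq_of_mul_eq_mul_left hP2 (by omega)
      exact h this
  -- monomial behaviour at u = 0
  have hmono0 : ∀ p : MixedIdx, p.1.1 = 0 → p.2.1 = 0 → mono p 0 v = mono p 1 v := by
    intro p h1 h2
    simp [mono, h1, h2]
  have hmono0' : ∀ p : MixedIdx, p.1.1 + p.2.1 ≠ 0 → mono p 0 v = 0 := by
    intro p h
    rcases Nat.eq_zero_or_pos p.1.1 with h1 | h1
    · have h2 : p.2.1 ≠ 0 := by omega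
      simp [mono, map_zero, zero_pow h2]
    · simp [mono, zero_pow (by omega : p.1.1 ≠ 0)]
  -- the four eval identities
  have hev1 : eval (face Q' c) 1 v = eval (face P c) 0 v := by
    refine finsum_congr fun p => ?_
    by_cases hax : p.1.1 + p.2.1 = 0
    · rw [hmono0 p (by omega) (by omega), hfq, hfp p hax]
      by_cases hsm : p.1.2 + p.2.2 = m
      · rw [if_pos ⟨hax, hsm⟩, if_pos hsm]
      · rw [if_neg (by tauto), if_neg hsm]
    · rw [hmono0' p hax, hfq, if_neg (by tauto), zero_mul, mul_zero]
  have hDv : eval (Dv (face Q' c)) 1 v = eval (Dv (face P c)) 0 v := by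
    refine finsum_congr fun p => ?_
    simp only [Dv]
    by_cases hax : p.1.1 + p.2.1 = 0
    · rw [hmono0 p (by omega) (by omega)]
      congr 2
      rw [hfq, hfp ((p.1.1, p.1.2 + 1), p.2) hax]
      by_cases hsm : p.1.2 + 1 + p.2.2 = m
      · rw [if_pos ⟨hax, hsm⟩, if_pos hsm]
      · rw [if_neg (by tauto), if_neg hsm]
    · have h1 : face Q' c ((p.1.1, p.1.2 + 1), p.2) = 0 := by
        rw [hfq]; exact if_neg (by tauto)
      rw [hmono0' p hax, h1]
      ring
  have hDvb : eval (Dvb (face Q' c)) 1 v = eval (Dvb (face P c)) 0 v := by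
    refine finsum_congr fun p => ?_
    simp only [Dvb]
    by_cases hax : p.1.1 + p.2.1 = 0
    · rw [hmono0 p (by omega) (by omega)]
      congr 2
      rw [hfq, hfp (p.1, (p.2.1, p.2.2 + 1)) hax]
      by_cases hsm : p.1.2 + (p.2.2 + 1) = m
      · rw [if_pos ⟨hax, hsm⟩, if_pos hsm]
      · rw [if_neg (by tauto), if_neg hsm]
    · have h1 : face Q' c (p.1, (p.2.1, p.2.2 + 1)) = 0 := by
        rw [hfq]; exact if_neg (by tauto)
      rw [hmono0' p hax, h1]
      ring
  have hDu0 : eval (Du (face Q' c)) 1 v = 0 := by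
    have hz : ∀ p : MixedIdx, Du (face Q' c) p = 0 := by
      intro p
      simp only [Du, hfq]
      rw [if_neg (by rintro ⟨h1, -⟩; omega)]
      ring
    calc eval (Du (face Q' c)) 1 v = ∑ᶠ p : MixedIdx, (0 : ℂ) :=
        finsum_congr fun p => by rw [hz p]; ring
    _ = 0 := finsum_zero
  have hDub0 : eval (Dub (face Q' c)) 1 v = 0 := by
    have hz : ∀ p : MixedIdx, Dub (face Q' c) p = 0 := by
      intro p
      simp only [Dub, hfq]
      rw [if_neg (by rintro ⟨h1, -⟩; omega)]
      ring
    calc eval (Dub (face Q' c)) 1 v = ∑ᶠ p : MixedIdx, (0 : ℂ) :=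
        finsum_congr fun p => by rw [hz p]; ring
    _ = 0 := finsum_zero
  refine hnd Q' (Nat.succ_pos M) Nat.one_pos 1 v one_ne_zero hv
    (hev1.trans hev) ⟨?_, ?_, ?_⟩
  · rw [hDu0, hDub0]
    simp
  · rw [hDu0, hDub0]
  · rw [hDv, hDvb]
    exact hcrit.2.2
lemma vertexFace_eq_face {c : MixedCoeff} {w : ℕ × ℕ} (h : NonExtremeVertex c w) :
    ∃ R : ℕ × ℕ, 0 < R.1 ∧ 0 < R.2 ∧ face R c = vertexFace w c := by
  obtain ⟨⟨pw, hpw, hpwe⟩, P, Q, hPfw, hQfw, hdet, hPw, hQw⟩ := h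
  obtain ⟨hP1, hP2, -⟩ := hPfw
  obtain ⟨hQ1, hQ2, -⟩ := hQfw
  refine ⟨(P.1 + Q.1, P.2 + Q.2), by omega, by omega, ?_⟩
  have hell : ∀ e : ℕ × ℕ, ellP (P.1 + Q.1, P.2 + Q.2) e = ellP P e + ellP Q e := by
    intro e
    show (P.1 + Q.1) * e.1 + (P.2 + Q.2) * e.2
      = (P.1 * e.1 + P.2 * e.2) + (Q.1 * e.1 + Q.2 * e.2)
    ring
  have hdR : dmin (P.1 + Q.1, P.2 + Q.2) c = dmin P c + dmin Q c := by
    refine dmin_eq ⟨pw, hpw, by rw [hell, hpwe, hPw, hQw]⟩ ?_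
    intro r hr
    rw [hell]
    exact Nat.add_le_add (dmin_le hr) (dmin_le hr)
  funext p
  rw [face, vertexFace, hdR]
  by_cases hc : c p = 0
  · simp [hc]
  by_cases he : expo p = w
  · rw [if_pos (by rw [hell, he, hPw, hQw]), if_pos he]
  · rw [if_neg ?_, if_neg he]
    intro hcon
    rw [hell] at hcon
    have h1 : dmin P c ≤ ellP P (expo p) := dmin_le hc
    have h2 : dmin Q c ≤ ellP Q (expo p) := dmin_le hc
    have e1 : ellP P (expo p) = ellP P w := by omega
    have e2 : ellP Q (expo p) = ellP Q w := by omega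
    have e1' : (P.1 : ℤ) * (expo p).1 + P.2 * (expo p).2 = P.1 * w.1 + P.2 * w.2 := by
      exact_mod_cast e1
    have e2' : (Q.1 : ℤ) * (expo p).1 + Q.2 * (expo p).2 = Q.1 * w.1 + Q.2 * w.2 := by
      exact_mod_cast e2
    have hd' : (P.1 : ℤ) * Q.2 ≠ (Q.1 : ℤ) * P.2 := by exact_mod_cast hdet
    have hx : ((expo p).1 : ℤ) - w.1 = 0 := by
      have h3 : ((P.1 : ℤ) * Q.2 - Q.1 * P.2) * (((expo p).1 : ℤ) - w.1) = 0 := by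
        linear_combination (Q.2 : ℤ) * e1' - (P.2 : ℤ) * e2'
      rcases mul_eq_zero.1 h3 with h4 | h4
      · exact absurd (by linarith) hd'
      · exact h4
    have hy : ((expo p).2 : ℤ) - w.2 = 0 := by
      have h3 : ((P.1 : ℤ) * Q.2 - Q.1 * P.2) * (((expo p).2 : ℤ) - w.2) = 0 := by
        linear_combination (P.1 : ℤ) * e2' - (Q.1 : ℤ) * e1'
      rcases mul_eq_zero.1 h3 with h4 | h4
      · exact absurd (by linarith) hd'
      · exact h4
    have hx' : (expo p).1 = w.1 := by exact_mod_cast sub_eq_zero.1 hx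
    have hy' : (expo p).2 = w.2 := by exact_mod_cast sub_eq_zero.1 hy
    exact he (Prod.ext hx' hy')
/-- a Newton non-degenerate, convenient mixed polynomial has an inner
Newton non-degenerate boundary. -/
theorem newton_nondeg_convenient_implies_inner
    (c : MixedCoeff) (hfin : FiniteSupp c)
    (hN : ∃ P, IsFaceWeight c P)
    (huc : UConvenient c) (hvc : VConvenient c)
    (hnd : NewtonNonDeg c) :
    InnerNonDeg c := by
  refine ⟨?_, ?_, ?_, ?_⟩
  · intro P hP u v hv hev
    exact main_v c hfin hvc hnd hP u v hv hev
  · intro P hP u v hu hev hcrit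
    refine main_v (flipC c) (finiteSupp_flip hfin) (vConvenient_flip huc)
      (newtonNonDeg_flip hnd) (isSteepest_flip hP) v u hu ?_ ?_
    · rw [face_flip, eval_flip]
      exact hev
    · rw [face_flip, crit_flip]
      exact hcrit
  · intro P hP u v hu hv hev
    exact hnd P hP.1 hP.2.1 u v hu hv hev
  · intro w hw u v hu hv hev hcrit
    obtain ⟨R, hR1, hR2, hRface⟩ := vertexFace_eq_face hw
    rw [← hRface] at hev hcrit
    exact hnd R hR1 hR2 u v hu hv hev hcrit
end
end

section
/- The polynomial f(u,v) = u⁴ − u²v³ (holomorphic, hence a mixed polynomial) is Newton non-degenerate but not inner non-degenerate. -/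
open Complex

noncomputable section

/-- The coefficients of `f(u,v) = u⁴ − u²v³`. -/
def c8 : MixedCoeff := fun p =>
  if p = ((4, 0), (0, 0)) then 1 else if p = ((2, 3), (0, 0)) then -1 else 0

/-! The face functions of `f = u⁴ − u²v³` are `f`, `u⁴` and `−u²v³`. Since `f` is holomorphic,
a critical point is a common zero of `∂f/∂u = 4u³ − 2uv³` and `∂f/∂v = −3u²v²`. In `(ℂ*)²` the
`v`-derivative of a face function vanishes only if the face omits `u²v³`, and then the
`u`-derivative is `4u³ ≠ 0`: so `f` is Newton non-degenerate. The only compact face has weight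
`(3, 2)`, so it is the steepest one, with face function `f` itself; but both derivatives vanish
on the whole line `u = 0`, which lies in `f⁻¹(0)` and meets `v ≠ 0`. -/

section MixedPolynomial

variable {c d : MixedCoeff}

def IsHolomorphic (c : MixedCoeff) : Prop := ∀ p ∈ Function.support c, p.2 = (0, 0)

lemma eval_eq_sum_of_support_subset {s : Finset MixedIdx} (h : Function.support c ⊆ s)
    (u v : ℂ) : eval c u v = ∑ p ∈ s, c p * mono p u v :=
  finsum_eq_sum_of_support_subset _ ((Function.support_mul_subset_left _ _).trans h)

lemma eval_zero (u v : ℂ) : eval 0 u v = 0 := by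
  simp [eval]

lemma IsHolomorphic.mono (hc : IsHolomorphic c) (h : Function.support d ⊆ Function.support c) :
    IsHolomorphic d :=
  fun p hp => hc p (h hp)

lemma IsHolomorphic.Dub_eq_zero (hc : IsHolomorphic c) : Dub c = 0 := by
  funext p
  by_contra hne
  have := hc _ (right_ne_zero_of_mul hne)
  simp [Prod.ext_iff] at this

lemma IsHolomorphic.Dvb_eq_zero (hc : IsHolomorphic c) : Dvb c = 0 := by
  funext p
  by_contra hne
  have := hc _ (right_ne_zero_of_mul hne)
  simp [Prod.ext_iff] at this

lemma IsHolomorphic.crit_iff (hc : IsHolomorphic c) (u v : ℂ) :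
    Crit c u v ↔ eval (Du c) u v = 0 ∧ eval (Dv c) u v = 0 := by
  simp [Crit, hc.Dub_eq_zero, hc.Dvb_eq_zero, eval_zero]

lemma support_face_subset (P : ℕ × ℕ) (c : MixedCoeff) :
    Function.support (face P c) ⊆ Function.support c := by
  intro p hp
  by_contra h
  exact hp (by simp [face, Function.notMem_support.mp h])

lemma face_ne_zero (hc : c ≠ 0) (P : ℕ × ℕ) : face P c ≠ 0 := by
  obtain ⟨p, hp⟩ := Function.ne_iff.mp hc
  obtain ⟨q, hq, hdeg⟩ := Nat.sInf_mem
    (⟨_, p, hp, rfl⟩ : {n | ∃ p, c p ≠ 0 ∧ ellP P (expo p) = n}.Nonempty)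
  exact Function.ne_iff.mpr ⟨q, by simpa [face, dmin, hdeg] using hq⟩

section Homogeneous

variable {P : ℕ × ℕ} {n : ℕ} (h : ∀ p ∈ Function.support c, ellP P (expo p) = n)
include h

lemma dmin_eq_of_forall_ellP_eq {p : MixedIdx} (hp : c p ≠ 0) : dmin P c = n := by
  have hset : {m | ∃ q, c q ≠ 0 ∧ ellP P (expo q) = m} = {n} :=
    Set.eq_singleton_iff_unique_mem.mpr ⟨⟨p, hp, h p hp⟩, fun _ ⟨q, hq, hm⟩ => hm ▸ h q hq⟩
  rw [dmin, hset, csInf_singleton]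

lemma face_eq_self_of_forall_ellP_eq : face P c = c := by
  funext p
  by_cases hp : c p = 0
  · simp [face, hp]
  · rw [face, dmin_eq_of_forall_ellP_eq h hp, if_pos (h p hp)]

end Homogeneous

end MixedPolynomial

section SubpolynomialOfC8

lemma support_c8 : Function.support c8 = {((4, 0), (0, 0)), ((2, 3), (0, 0))} := by
  ext p
  by_cases h₁ : p = ((4, 0), (0, 0))
  · simp [c8, h₁]
  · by_cases h₂ : p = ((2, 3), (0, 0)) <;> simp [c8, h₁, h₂]

lemma c8_ne_zero : c8 ≠ 0 :=
  Function.ne_iff.mpr ⟨((4, 0), (0, 0)), by simp [c8]⟩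

lemma isHolomorphic_c8 : IsHolomorphic c8 := by
  intro p hp
  rw [support_c8] at hp
  rcases hp with rfl | rfl <;> rfl

variable {c : MixedCoeff} (hc : Function.support c ⊆ Function.support c8)
include hc

lemma eval_of_support_subset_c8 (u v : ℂ) :
    eval c u v = c ((4, 0), (0, 0)) * u ^ 4 + c ((2, 3), (0, 0)) * (u ^ 2 * v ^ 3) := by
  rw [support_c8] at hc
  rw [eval_eq_sum_of_support_subset (s := {((4, 0), (0, 0)), ((2, 3), (0, 0))})
    (by simpa using hc), Finset.sum_pair (by decide)]
  simp [mono]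

lemma support_Du_subset_of_subset_c8 :
    Function.support (Du c) ⊆ {((3, 0), (0, 0)), ((1, 3), (0, 0))} := by
  intro p hp
  have := hc (right_ne_zero_of_mul hp)
  rw [support_c8] at this
  obtain ⟨⟨a, b⟩, m, n⟩ := p
  simp only [Set.mem_insert_iff, Set.mem_singleton_iff, Prod.ext_iff] at this ⊢
  omega

lemma support_Dv_subset_of_subset_c8 : Function.support (Dv c) ⊆ {((2, 2), (0, 0))} := by
  intro p hp
  have := hc (right_ne_zero_of_mul hp)
  rw [support_c8] at this
  obtain ⟨⟨a, b⟩, m, n⟩ := p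
  simp only [Set.mem_insert_iff, Set.mem_singleton_iff, Prod.ext_iff] at this ⊢
  omega

lemma eval_Du_of_support_subset_c8 (u v : ℂ) :
    eval (Du c) u v
      = 4 * c ((4, 0), (0, 0)) * u ^ 3 + 2 * c ((2, 3), (0, 0)) * (u * v ^ 3) := by
  rw [eval_eq_sum_of_support_subset (s := {((3, 0), (0, 0)), ((1, 3), (0, 0))})
    (by simpa using support_Du_subset_of_subset_c8 hc), Finset.sum_pair (by decide)]
  simp only [Du, mono]
  norm_num

lemma eval_Dv_of_support_subset_c8 (u v : ℂ) :
    eval (Dv c) u v = 3 * c ((2, 3), (0, 0)) * (u ^ 2 * v ^ 2) := by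
  rw [eval_eq_sum_of_support_subset (s := {((2, 2), (0, 0))})
    (by simpa using support_Dv_subset_of_subset_c8 hc), Finset.sum_singleton]
  simp only [Dv, mono]
  norm_num

lemma eq_zero_of_crit_of_support_subset_c8 {u v : ℂ} (hu : u ≠ 0) (hv : v ≠ 0)
    (hcrit : Crit c u v) : c = 0 := by
  rw [(isHolomorphic_c8.mono hc).crit_iff, eval_Du_of_support_subset_c8 hc,
    eval_Dv_of_support_subset_c8 hc] at hcrit
  obtain ⟨hDu, hDv⟩ := hcrit
  have hB : c ((2, 3), (0, 0)) = 0 := by simpa [hu, hv] using hDv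
  have hA : c ((4, 0), (0, 0)) = 0 := by simpa [hB, hu] using hDu
  funext p
  by_contra hp
  rcases (support_c8 ▸ hc) hp with rfl | rfl
  exacts [hp hA, hp hB]

lemma crit_of_fst_eq_zero_of_support_subset_c8 (v : ℂ) : Crit c 0 v := by
  rw [(isHolomorphic_c8.mono hc).crit_iff, eval_Du_of_support_subset_c8 hc,
    eval_Dv_of_support_subset_c8 hc]
  simp

end SubpolynomialOfC8

lemma two_mul_fst_eq_of_isFaceWeight_c8 {Q : ℕ × ℕ} (hQ : IsFaceWeight c8 Q) :
    2 * Q.1 = 3 * Q.2 := by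
  obtain ⟨-, -, -, p, q, hp, hq, hne, hpQ, hqQ⟩ := hQ
  have hp' : p ∈ Function.support c8 := hp
  have hq' : q ∈ Function.support c8 := hq
  rw [support_c8] at hp' hq'
  rcases hp' with rfl | rfl <;> rcases hq' with rfl | rfl <;>
    simp only [ellP, expo, ne_eq, not_true_eq_false] at hne hpQ hqQ ⊢ <;> omega

lemma forall_ellP_c8_eq_twelve : ∀ p ∈ Function.support c8, ellP (3, 2) (expo p) = 12 := by
  rw [support_c8]
  rintro p (rfl | rfl) <;> rfl

lemma isSteepest_c8 : IsSteepest c8 (3, 2) := by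
  have hdmin := dmin_eq_of_forall_ellP_eq forall_ellP_c8_eq_twelve (p := ((4, 0), (0, 0)))
    (by simp [c8])
  refine ⟨⟨by norm_num, by norm_num, by norm_num, ((4, 0), (0, 0)), ((2, 3), (0, 0)),
    by simp [c8], by simp [c8], by decide, by rw [hdmin]; rfl, by rw [hdmin]; rfl⟩, ?_⟩
  intro Q hQ
  have := two_mul_fst_eq_of_isFaceWeight_c8 hQ
  omega

/-- `f(u,v) = u⁴ − u²v³` is Newton non-degenerate but not inner
non-degenerate. -/
theorem c8_newton_nondeg_not_inner :
    NewtonNonDeg c8 ∧ ¬ InnerNonDeg c8 := by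
  refine ⟨fun Q _ _ u v hu hv _ hcrit => ?_, fun hinner => ?_⟩
  · exact face_ne_zero c8_ne_zero Q
      (eq_zero_of_crit_of_support_subset_c8 (support_face_subset Q c8) hu hv hcrit)
  · have hface : face (3, 2) c8 = c8 := face_eq_self_of_forall_ellP_eq forall_ellP_c8_eq_twelve
    exact hinner.1 (3, 2) isSteepest_c8 0 1 one_ne_zero
      (by simp [hface, eval_of_support_subset_c8 subset_rfl])
      (by rw [hface]; exact crit_of_fst_eq_zero_of_support_subset_c8 subset_rfl 1)
end
end
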